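/- arXiv:2008.01031 — 2 statements merged into one kernel-verified Lean document; each statement's English description precedes it below -/
import Mathlib

section
/- Let b ≥ 2 be an integer, let ρ > 0, set q = ρ/(1300b²), and let 0 < ε < min{1/3, ρ/2}. Then for all sufficiently large n the following holds. Let V be an n-element set, let V₀ ⊆ V with |V₀| ≤ εn, and suppose that for every v ∈ V we are given a family ℱ_v of at least ρn pairwise disjoint (b−1)-subsets of V∖{v}. Then there exists a set X ⊆ V∖V₀ with qn/2 ≤ |X| ≤ 2qn such that for every v ∈ V at least q^{b−1}·ρn/4 members of ℱ_v are contained in X. -/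
open Finset Filter Topology

/-- All potential edges of a `k`-uniform hypergraph on `Fin n`. -/
def allEdges (n k : ℕ) : Finset (Finset (Fin n)) :=
  Finset.powersetCard k Finset.univ

/-- Probability that the binomial random `k`-graph `H^{(k)}(n,p)` satisfies `P`. -/
noncomputable def rProb (n k : ℕ) (p : ℝ) (P : Finset (Finset (Fin n)) → Prop) : ℝ :=
  letI : DecidablePred P := fun E => Classical.propDecidable (P E)
  ∑ E ∈ (allEdges n k).powerset,
    if P E then p ^ E.card * (1 - p) ^ ((allEdges n k).card - E.card) else 0

/-- Expectation of `X` with respect to the binomial random `k`-graph `H^{(k)}(n,p)`. -/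
noncomputable def rExp (n k : ℕ) (p : ℝ) (X : Finset (Finset (Fin n)) → ℝ) : ℝ :=
  ∑ E ∈ (allEdges n k).powerset,
    p ^ E.card * (1 - p) ^ ((allEdges n k).card - E.card) * X E

/-- The degree of a vertex `v` in the hypergraph `H`. -/
def degH {n : ℕ} (H : Finset (Finset (Fin n))) (v : Fin n) : ℕ :=
  (H.filter fun e => v ∈ e).card

/-- The minimum vertex degree of `H`. -/
noncomputable def minDeg {n : ℕ} (H : Finset (Finset (Fin n))) : ℕ :=
  sInf { d : ℕ | ∃ v : Fin n, d = degH H v }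

/-- `G` has a perfect matching. -/
def HasPerfectMatching {n : ℕ} (G : Finset (Finset (Fin n))) : Prop :=
  ∃ M : Finset (Finset (Fin n)), M ⊆ G ∧
    (∀ e ∈ M, ∀ f ∈ M, e ≠ f → Disjoint e f) ∧ ∀ v : Fin n, ∃ e ∈ M, v ∈ e

/-- `f` is (the embedding of) a copy of `F` in `G`. -/
def IsCopyIn {b n : ℕ} (F : Finset (Finset (Fin b))) (G : Finset (Finset (Fin n)))
    (f : Fin b → Fin n) : Prop :=
  Function.Injective f ∧ ∀ e ∈ F, e.image f ∈ G

/-- The induced subgraph of `G` on `S` contains a copy of `F`. -/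
def ContainsCopy {b n : ℕ} (F : Finset (Finset (Fin b))) (G : Finset (Finset (Fin n)))
    (S : Finset (Fin n)) : Prop :=
  ∃ f : Fin b → Fin n, IsCopyIn F G f ∧ ∀ x, f x ∈ S

/-- `T` is a collection of pairwise vertex-disjoint copies of `F` in `G` whose vertex
sets partition `S`, i.e. an `F`-factor of the induced subgraph `G[S]`. -/
def IsFactorWitness {b n : ℕ} (F : Finset (Finset (Fin b))) (G : Finset (Finset (Fin n)))
    (S : Finset (Fin n)) (T : Finset (Fin b → Fin n)) : Prop :=
  (∀ f ∈ T, IsCopyIn F G f) ∧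
  (∀ f ∈ T, ∀ g ∈ T, f ≠ g → Disjoint (Finset.univ.image f) (Finset.univ.image g)) ∧
  T.biUnion (fun f => Finset.univ.image f) = S

/-- The induced subgraph `G[S]` has an `F`-factor. -/
def HasFactorOn {b n : ℕ} (F : Finset (Finset (Fin b))) (G : Finset (Finset (Fin n)))
    (S : Finset (Fin n)) : Prop :=
  ∃ T, IsFactorWitness F G S T

/-- `A` is an `(S,F)`-absorber in `H`. -/
def IsAbsorber {b n : ℕ} (F : Finset (Finset (Fin b))) (H : Finset (Finset (Fin n)))
    (S A : Finset (Fin n)) : Prop :=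
  A.Nonempty ∧ Disjoint A S ∧ b ∣ A.card ∧ HasFactorOn F H A ∧ HasFactorOn F H (A ∪ S)

/-- `A` is a simple `S`-absorber in `G`: `A` is a disjoint union of `b`-sets
`A₁, …, A_b`, with distinguished vertices `u i ∈ A i`, such that for some labelling
`s₁, …, s_b` of `S`, each `G[Aᵢ]` and each `G[{sᵢ} ∪ (Aᵢ \ {u i})]` contains a copy of
`F`, and `G[{u 1, …, u b}]` contains a copy of `F`. -/
def SimpleAbsorber {b n : ℕ} (F : Finset (Finset (Fin b))) (G : Finset (Finset (Fin n)))
    (S A : Finset (Fin n)) : Prop :=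
  Disjoint A S ∧
  ∃ (Ai : Fin b → Finset (Fin n)) (u : Fin b → Fin n) (s : Fin b → Fin n),
    Function.Injective s ∧ Finset.univ.image s = S ∧
    (∀ i, (Ai i).card = b) ∧ (∀ i, u i ∈ Ai i) ∧
    (∀ i j, i ≠ j → Disjoint (Ai i) (Ai j)) ∧
    Finset.univ.biUnion Ai = A ∧
    (∀ i, ContainsCopy F G (Ai i)) ∧
    (∀ i, ContainsCopy F G (insert (s i) ((Ai i).erase (u i)))) ∧
    ContainsCopy F G (Finset.univ.image u)

/-- `Φ_F(n,p) = min { n^{v_{F'}} p^{e_{F'}} : F' ⊆ F, e_{F'} > 0 }`, the minimum being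
over all subgraphs `F'` of `F` (given by a vertex set `V' ⊆ Vset` and a nonempty edge
set `E' ⊆ F` with all edges inside `V'`). -/
noncomputable def Phi {α : Type*} (Vset : Finset α) (F : Finset (Finset α)) (n : ℕ)
    (p : ℝ) : ℝ :=
  sInf { x : ℝ | ∃ (V' : Finset α) (E' : Finset (Finset α)), V' ⊆ Vset ∧ E' ⊆ F ∧
    E'.Nonempty ∧ (∀ e ∈ E', e ⊆ V') ∧ x = (n : ℝ) ^ V'.card * p ^ E'.card }

/-- `d*(F) = max { e_{F'}/(v_{F'} - 1) : F' ⊆ F, v_{F'} ≥ 2 }`. -/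
noncomputable def dStar {α : Type*} (Vset : Finset α) (F : Finset (Finset α)) : ℝ :=
  sSup { x : ℝ | ∃ (V' : Finset α) (E' : Finset (Finset α)), V' ⊆ Vset ∧ E' ⊆ F ∧
    (∀ e ∈ E', e ⊆ V') ∧ 2 ≤ V'.card ∧ x = (E'.card : ℝ) / ((V'.card : ℝ) - 1) }

/-- The number of embeddings of `F_v` (the spanning subgraph of `F` consisting of the
edges containing `v`) into `H` that map `v` to `w`. -/
noncomputable def embCount (k b : ℕ) (F : Finset (Finset (Fin b))) (v : Fin b) {n : ℕ}
    (H : Finset (Finset (Fin n))) (w : Fin n) : ℕ :=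
  letI : DecidablePred (fun f : Fin b → Fin n =>
      Function.Injective f ∧ f v = w ∧ ∀ e ∈ F, v ∈ e → e.image f ∈ H) :=
    fun f => Classical.propDecidable _
  (Finset.univ.filter fun f : Fin b → Fin n =>
    Function.Injective f ∧ f v = w ∧ ∀ e ∈ F, v ∈ e → e.image f ∈ H).card

/-- The set `Λ_{F,v}`. -/
def LambdaSet (k b : ℕ) (F : Finset (Finset (Fin b))) (v : Fin b) : Set ℝ :=
  { a : ℝ | 0 < a ∧ ∀ ε : ℝ, 0 < ε → ∃ ε' : ℝ, 0 < ε' ∧ ∃ n₀ : ℕ, ∀ n : ℕ, n₀ ≤ n →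
    ∀ H : Finset (Finset (Fin n)), (∀ e ∈ H, e.card = k) →
      (∀ u : Fin n, (a + ε) * ((n - 1).choose (k - 1) : ℝ) ≤ (degH H u : ℝ)) →
      ∀ w : Fin n, ε' * (n : ℝ) ^ (b - 1) ≤ (embCount k b F v H w : ℝ) }

/-- `α_F := min_{v ∈ V(F)} inf Λ_{F,v}`. -/
noncomputable def alphaF (k b : ℕ) (F : Finset (Finset (Fin b))) : ℝ :=
  ⨅ v : Fin b, sInf (LambdaSet k b F v)

/-- The `n`-vertex `k`-graph `H_n(A,B,η)`, whose edges are exactly the `k`-subsets of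
the vertex set meeting `A` (here `B` is the complement of `A`). -/
def Hgraph (n k : ℕ) (A : Finset (Fin n)) : Finset (Finset (Fin n)) :=
  (allEdges n k).filter fun e => (e ∩ A).Nonempty

/-- The link of `v` in `F`, a `(k-1)`-graph. -/
def linkAt {b : ℕ} (F : Finset (Finset (Fin b))) (v : Fin b) : Finset (Finset (Fin b)) :=
  (F.filter fun e => v ∈ e).image fun e => e.erase v

/-- The Turán number `ex(n, G)`: the maximum number of edges of a `k'`-graph on `n`
vertices containing no copy of `G`. -/
noncomputable def exNum (n k' : ℕ) {b : ℕ} (G : Finset (Finset (Fin b))) : ℕ :=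
  sSup { m : ℕ | ∃ H' : Finset (Finset (Fin n)), (∀ e ∈ H', e.card = k') ∧
    (¬ ∃ f : Fin b → Fin n, Function.Injective f ∧ ∀ e ∈ G, e.image f ∈ H') ∧
    m = H'.card }

/-- The number of ordered sets in `𝒜` spanning a labelled copy of `F` in `E`. -/
noncomputable def countSpan {s n : ℕ} (F : Finset (Finset (Fin s)))
    (𝒜 : Finset (Fin s → Fin n)) (E : Finset (Finset (Fin n))) : ℕ :=
  (𝒜.filter fun A => ∀ e ∈ F, e.image A ∈ E).card

/-!
Put each vertex outside `V₀` into `X` independently with probability `q`. At most `|V₀|` members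
of a disjoint family meet `V₀`, so each `ℱ_v` keeps at least `ρn/2` members avoiding `V₀`. These
are pairwise disjoint, hence the exponential moment of the number `N` of them inside `X`
factorises, `E[r^N] = ∏ (1 + (r - 1) q^|S|)`, and Chernoff bounds make the two events
`|X| ∉ (qn/2, 2qn)` and each of the `n` events "few members of `ℱ_v` lie in `X`" exponentially
unlikely in `n`. For large `n` a union bound leaves an outcome avoiding all of them.
-/

open Real

theorem Finset.pairwiseDisjoint_image_singleton {α : Type*} [DecidableEq α] (W : Finset α) :
    ((W.image singleton : Finset (Finset α)) : Set (Finset α)).PairwiseDisjoint id := by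
  rw [coe_image]
  rintro _ ⟨i, -, rfl⟩ _ ⟨j, -, rfl⟩ hij
  exact disjoint_singleton.mpr fun h => hij (h ▸ rfl)

theorem Finset.card_le_card_filter_disjoint_add_card {α : Type*} [DecidableEq α]
    {F : Finset (Finset α)} (hF : (F : Set (Finset α)).PairwiseDisjoint id) (A : Finset α) :
    #F ≤ #{S ∈ F | Disjoint S A} + #A := by
  have hmeet : #{S ∈ F | ¬Disjoint S A} ≤ #A :=
    calc #{S ∈ F | ¬Disjoint S A} ≤ #({S ∈ F | ¬Disjoint S A}.biUnion (· ∩ A)) :=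
          card_le_card_biUnion
            (fun S hS S' hS' h => (hF (filter_subset _ _ hS) (filter_subset _ _ hS') h).mono
              inter_subset_left inter_subset_left)
            fun S hS => not_disjoint_iff_nonempty_inter.mp (mem_filter.mp hS).2
      _ ≤ #A := card_le_card (biUnion_subset.mpr fun S _ => inter_subset_right)
  have := card_filter_add_card_filter_not (s := F) (fun S => Disjoint S A)
  omega

theorem Finset.card_le_card_univ_of_pairwiseDisjoint {α : Type*} [Fintype α] [DecidableEq α]
    {F : Finset (Finset α)} (hF : (F : Set (Finset α)).PairwiseDisjoint id)
    (hne : ∀ S ∈ F, S.Nonempty) : #F ≤ Fintype.card α :=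
  (card_le_card_biUnion hF hne).trans (card_le_univ _)

theorem eventually_two_mul_exp_add_mul_exp_lt_one {a c : ℝ} (ha : 0 < a) (hc : 0 < c) :
    ∀ᶠ n : ℕ in atTop, 2 * exp (-a * n) + n * exp (-c * n) < 1 := by
  have hlim : Tendsto (fun x : ℝ => 2 * exp (-a * x) + x * exp (-c * x)) atTop (𝓝 0) := by
    simpa using ((tendsto_rpow_mul_exp_neg_mul_atTop_nhds_zero 0 a ha).const_mul 2).add
      (tendsto_rpow_mul_exp_neg_mul_atTop_nhds_zero 1 c hc)
  exact (hlim.comp tendsto_natCast_atTop_atTop).eventually_lt_const one_pos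

namespace RandomSubset

variable {ι : Type*} [Fintype ι]

/- A random subset of `ι` containing each element independently with probability `q` is encoded
by `ω : ι → Bool`; `prob q P` is the probability of the event `P`. -/

noncomputable def bernoulliWeight (q : ℝ) (ω : ι → Bool) : ℝ :=
  ∏ i, if ω i then q else 1 - q

def selected (ω : ι → Bool) : Finset ι := {i | ω i}

variable {q : ℝ}

theorem bernoulliWeight_nonneg (hq0 : 0 ≤ q) (hq1 : q ≤ 1) (ω : ι → Bool) :
    0 ≤ bernoulliWeight q ω :=
  prod_nonneg fun i _ => by split <;> linarith

variable [DecidableEq ι]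

noncomputable def prob (q : ℝ) (P : (ι → Bool) → Prop) [DecidablePred P] : ℝ :=
  ∑ ω with P ω, bernoulliWeight q ω

def containedCount (T : Finset (Finset ι)) (ω : ι → Bool) : ℕ := #{S ∈ T | S ⊆ selected ω}

theorem prob_subset_selected (q : ℝ) (U : Finset ι) :
    prob q (fun ω => U ⊆ selected ω) = q ^ #U := by
  have hfactor : ∀ ω : ι → Bool, (∏ i, if ω i then q else if i ∈ U then 0 else 1 - q) =
      if U ⊆ selected ω then bernoulliWeight q ω else 0 := by
    intro ω
    split_ifs with hU
    · refine prod_congr rfl fun i _ => ?_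
      have : i ∈ U → ω i := fun hi => by simpa [selected] using hU hi
      grind
    · obtain ⟨i, hiU, hiω⟩ := not_subset.mp hU
      exact prod_eq_zero (mem_univ i) (by simp_all [selected])
  have hsum : ∀ i, (∑ t : Bool, if t then q else if i ∈ U then 0 else 1 - q) =
      if i ∈ U then q else 1 := by
    intro i
    simp only [Fintype.sum_bool, if_true, Bool.false_eq_true, if_false]
    split_ifs <;> ring
  rw [prob, sum_filter, ← Fintype.sum_congr _ _ hfactor,
    ← Fintype.prod_sum fun i (t : Bool) => if t then q else if i ∈ U then 0 else 1 - q]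
  simp only [hsum, Fintype.prod_ite_mem, prod_const]

theorem sum_bernoulliWeight (q : ℝ) : ∑ ω : ι → Bool, bernoulliWeight q ω = 1 := by
  simpa [prob] using prob_subset_selected (ι := ι) q ∅

theorem prob_or_le (hq0 : 0 ≤ q) (hq1 : q ≤ 1) (P Q : (ι → Bool) → Prop) [DecidablePred P]
    [DecidablePred Q] : prob q (fun ω => P ω ∨ Q ω) ≤ prob q P + prob q Q := by
  simp only [prob, sum_filter, ← sum_add_distrib]
  refine sum_le_sum fun ω _ => ?_
  have := bernoulliWeight_nonneg hq0 hq1 ω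
  split_ifs <;> simp_all

theorem prob_exists_le (hq0 : 0 ≤ q) (hq1 : q ≤ 1) {κ : Type*} [Fintype κ]
    (P : κ → (ι → Bool) → Prop) [∀ k, DecidablePred (P k)] :
    prob q (fun ω => ∃ k, P k ω) ≤ ∑ k, prob q (P k) := by
  simp only [prob, sum_filter]
  rw [sum_comm]
  refine sum_le_sum fun ω _ => ?_
  split_ifs with h
  · obtain ⟨k, hk⟩ := h
    calc bernoulliWeight q ω = if P k ω then bernoulliWeight q ω else 0 := (if_pos hk).symm
      _ ≤ ∑ k, if P k ω then bernoulliWeight q ω else 0 :=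
        single_le_sum (f := fun k => if P k ω then bernoulliWeight q ω else 0)
          (fun k _ => by have := bernoulliWeight_nonneg hq0 hq1 ω; split_ifs <;> simp [*])
          (mem_univ k)
  · exact sum_nonneg fun k _ => by have := bernoulliWeight_nonneg hq0 hq1 ω; split_ifs <;> simp [*]

theorem exists_not_of_prob_lt_one (P : (ι → Bool) → Prop) [DecidablePred P]
    (h : prob q P < 1) : ∃ ω, ¬ P ω := by
  by_contra! hall
  rw [prob, filter_true_of_mem fun ω _ => hall ω, sum_bernoulliWeight] at h
  exact h.false

theorem sum_bernoulliWeight_mul_pow_containedCount (q r : ℝ) {T : Finset (Finset ι)}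
    (hT : (T : Set (Finset ι)).PairwiseDisjoint id) :
    ∑ ω, bernoulliWeight q ω * r ^ containedCount T ω = ∏ S ∈ T, (1 + (r - 1) * q ^ #S) := by
  have hpow : ∀ ω, r ^ containedCount T ω =
      ∑ K ∈ T.powerset, if K.biUnion id ⊆ selected ω then (r - 1) ^ #K else 0 := by
    intro ω
    have hpowerset : {S ∈ T | S ⊆ selected ω}.powerset =
        {K ∈ T.powerset | K.biUnion id ⊆ selected ω} := by
      ext K
      simp only [mem_powerset, mem_filter, biUnion_subset, id, subset_iff (s₁ := K)]
      grind
    rw [containedCount, ← sum_filter, ← hpowerset, ← sub_add_cancel r 1,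
      ← sum_pow_mul_eq_add_pow]
    simp
  have hunion : ∀ K ∈ T.powerset, q ^ #(K.biUnion id) = ∏ S ∈ K, q ^ #S := fun K hK => by
    rw [card_biUnion (hT.subset (mem_powerset.mp hK)), prod_pow_eq_pow_sum]; rfl
  calc ∑ ω, bernoulliWeight q ω * r ^ containedCount T ω
      = ∑ K ∈ T.powerset, (r - 1) ^ #K * prob q (fun ω => K.biUnion id ⊆ selected ω) := by
        simp only [hpow, mul_sum, prob, sum_filter]
        rw [sum_comm]
        refine sum_congr rfl fun K _ => sum_congr rfl fun ω _ => ?_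
        split_ifs <;> ring
    _ = ∑ K ∈ T.powerset, ∏ S ∈ K, (r - 1) * q ^ #S := by
        refine sum_congr rfl fun K hK => ?_
        rw [prob_subset_selected, hunion K hK, prod_mul_distrib, prod_const]
    _ = ∏ S ∈ T, (1 + (r - 1) * q ^ #S) := (prod_one_add T).symm

theorem prob_le_chernoff (hq0 : 0 ≤ q) (hq1 : q ≤ 1) {T : Finset (Finset ι)}
    (hT : (T : Set (Finset ι)).PairwiseDisjoint id) (t y : ℝ) (P : (ι → Bool) → Prop)
    [DecidablePred P] (hP : ∀ ω, P ω → t * y ≤ t * containedCount T ω) :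
    prob q P ≤ exp ((exp t - 1) * ∑ S ∈ T, q ^ #S - t * y) := by
  have hw : ∀ ω : ι → Bool, 0 ≤ bernoulliWeight q ω := bernoulliWeight_nonneg hq0 hq1
  have hfactor : ∀ S ∈ T, 0 ≤ 1 + (exp t - 1) * q ^ #S := fun S _ => by
    nlinarith [exp_pos t, pow_le_one₀ hq0 hq1 (n := #S), pow_nonneg hq0 #S]
  calc prob q P
      ≤ ∑ ω with P ω, bernoulliWeight q ω * exp (t * containedCount T ω - t * y) :=
        sum_le_sum fun ω hω => le_mul_of_one_le_right (hw ω)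
          (one_le_exp (by linarith [hP ω (mem_filter.mp hω).2]))
    _ ≤ ∑ ω, bernoulliWeight q ω * exp (t * containedCount T ω - t * y) :=
        sum_le_sum_of_subset_of_nonneg (subset_univ _) fun ω _ _ =>
          mul_nonneg (hw ω) (exp_pos _).le
    _ = exp (-(t * y)) * ∏ S ∈ T, (1 + (exp t - 1) * q ^ #S) := by
        rw [← sum_bernoulliWeight_mul_pow_containedCount q _ hT, mul_sum]
        refine sum_congr rfl fun ω _ => ?_
        rw [sub_eq_add_neg, exp_add, mul_comm t, exp_nat_mul]
        ring
    _ ≤ exp (-(t * y)) * ∏ S ∈ T, exp ((exp t - 1) * q ^ #S) := by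
        refine mul_le_mul_of_nonneg_left (prod_le_prod hfactor fun S _ => ?_) (exp_pos _).le
        linarith [add_one_le_exp ((exp t - 1) * q ^ #S)]
    _ = exp ((exp t - 1) * ∑ S ∈ T, q ^ #S - t * y) := by
        rw [← exp_sum, ← exp_add, mul_sum]
        ring_nf

theorem prob_containedCount_le (hq0 : 0 ≤ q) (hq1 : q ≤ 1) {T : Finset (Finset ι)}
    (hT : (T : Set (Finset ι)).PairwiseDisjoint id) {s : ℕ} (hTs : ∀ S ∈ T, #S = s) (y : ℝ) :
    prob q (fun ω => (containedCount T ω : ℝ) ≤ y) ≤ exp (y / 4 - #T * q ^ s / 5) := by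
  have hsum : ∑ S ∈ T, q ^ #S = #T * q ^ s := by
    rw [sum_eq_card_nsmul fun S hS => by rw [hTs S hS], nsmul_eq_mul]
  have hexp : exp (-(1 / 4)) ≤ 4 / 5 := by
    rw [exp_neg, inv_le_comm₀ (exp_pos _) (by norm_num)]
    linarith [add_one_le_exp (1 / 4 : ℝ)]
  refine (prob_le_chernoff hq0 hq1 hT (-(1 / 4)) y _ fun ω hω => by linarith).trans
    (exp_le_exp.mpr ?_)
  rw [hsum]
  nlinarith [mul_nonneg (Nat.cast_nonneg (α := ℝ) #T) (pow_nonneg hq0 s)]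

theorem prob_le_containedCount (hq0 : 0 ≤ q) (hq1 : q ≤ 1) {T : Finset (Finset ι)}
    (hT : (T : Set (Finset ι)).PairwiseDisjoint id) {s : ℕ} (hTs : ∀ S ∈ T, #S = s) (y : ℝ) :
    prob q (fun ω => y ≤ (containedCount T ω : ℝ)) ≤ exp (7 / 4 * #T * q ^ s - y) := by
  have hsum : ∑ S ∈ T, q ^ #S = #T * q ^ s := by
    rw [sum_eq_card_nsmul fun S hS => by rw [hTs S hS], nsmul_eq_mul]
  refine (prob_le_chernoff hq0 hq1 hT 1 y _ fun ω hω => by linarith).trans (exp_le_exp.mpr ?_)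
  rw [hsum]
  nlinarith [mul_nonneg (Nat.cast_nonneg (α := ℝ) #T) (pow_nonneg hq0 s), exp_one_lt_d9]

theorem containedCount_image_singleton (W : Finset ι) (ω : ι → Bool) :
    containedCount (W.image singleton) ω = #(W ∩ selected ω) := by
  simp [containedCount, filter_image, card_image_of_injective _ singleton_injective,
    filter_mem_eq_inter]

theorem prob_card_inter_selected_le (hq0 : 0 ≤ q) (hq1 : q ≤ 1) (W : Finset ι) (y : ℝ) :
    prob q (fun ω => (#(W ∩ selected ω) : ℝ) ≤ y) ≤ exp (y / 4 - #W * q / 5) := by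
  have := prob_containedCount_le hq0 hq1 (pairwiseDisjoint_image_singleton W) (s := 1)
    (by simp) y
  simpa only [containedCount_image_singleton, card_image_of_injective _ singleton_injective,
    pow_one] using this

theorem prob_le_card_inter_selected (hq0 : 0 ≤ q) (hq1 : q ≤ 1) (W : Finset ι) (y : ℝ) :
    prob q (fun ω => y ≤ (#(W ∩ selected ω) : ℝ)) ≤ exp (7 / 4 * #W * q - y) := by
  have := prob_le_containedCount hq0 hq1 (pairwiseDisjoint_image_singleton W) (s := 1)
    (by simp) y
  simpa only [containedCount_image_singleton, card_image_of_injective _ singleton_injective,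
    pow_one] using this

theorem exists_selected_of_sum_exp_lt_one {κ : Type*} [Fintype κ] {ρ m : ℝ} {s : ℕ}
    (hq0 : 0 ≤ q) (hq1 : q ≤ 1) (W : Finset ι) (T : κ → Finset (Finset ι))
    (hT : ∀ k, (T k : Set (Finset ι)).PairwiseDisjoint id) (hTs : ∀ k, ∀ S ∈ T k, #S = s)
    (hW : 2 * m / 3 ≤ #W) (hWm : (#W : ℝ) ≤ m) (hTk : ∀ k, ρ * m / 2 ≤ #(T k))
    (hsmall : 2 * exp (-(q / 120) * m) + Fintype.card κ * exp (-(3 / 80 * q ^ s * ρ) * m) < 1) :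
    ∃ ω, q * m / 2 < #(W ∩ selected ω) ∧ (#(W ∩ selected ω) : ℝ) < 2 * (q * m) ∧
      ∀ k, q ^ s * ρ * m / 4 < containedCount (T k) ω := by
  classical
  -- The exponents: `qm/8 - q|W|/5 ≤ -qm/120` as `|W| ≥ 2m/3`, `7q|W|/4 - 2qm ≤ -qm/4`, and
  -- `q^s ρ m/16 - q^s |T k|/5 ≤ -3 q^s ρ m/80` as `|T k| ≥ ρm/2`.
  have hqW : q * (2 * m / 3) ≤ q * #W := mul_le_mul_of_nonneg_left hW hq0
  have hA : prob q (fun ω => (#(W ∩ selected ω) : ℝ) ≤ q * m / 2) ≤ exp (-(q / 120) * m) :=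
    (prob_card_inter_selected_le hq0 hq1 W _).trans (exp_le_exp.mpr (by nlinarith))
  have hB : prob q (fun ω => 2 * (q * m) ≤ (#(W ∩ selected ω) : ℝ)) ≤ exp (-(q / 120) * m) :=
    (prob_le_card_inter_selected hq0 hq1 W _).trans
      (exp_le_exp.mpr (by nlinarith [mul_nonneg hq0 (Nat.cast_nonneg (α := ℝ) #W)]))
  have hC : ∀ k, prob q (fun ω => (containedCount (T k) ω : ℝ) ≤ q ^ s * ρ * m / 4) ≤
      exp (-(3 / 80 * q ^ s * ρ) * m) := fun k =>
    (prob_containedCount_le hq0 hq1 (hT k) (hTs k) _).trans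
      (exp_le_exp.mpr (by nlinarith [mul_le_mul_of_nonneg_left (hTk k) (pow_nonneg hq0 s)]))
  obtain ⟨ω, hω⟩ := exists_not_of_prob_lt_one (q := q) (fun ω =>
    ((#(W ∩ selected ω) : ℝ) ≤ q * m / 2 ∨ 2 * (q * m) ≤ (#(W ∩ selected ω) : ℝ)) ∨
      ∃ k, (containedCount (T k) ω : ℝ) ≤ q ^ s * ρ * m / 4) <| by
    calc _ ≤ prob q (fun ω => (#(W ∩ selected ω) : ℝ) ≤ q * m / 2) +
          prob q (fun ω => 2 * (q * m) ≤ (#(W ∩ selected ω) : ℝ)) +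
          ∑ k, prob q (fun ω => (containedCount (T k) ω : ℝ) ≤ q ^ s * ρ * m / 4) :=
          (prob_or_le hq0 hq1 _ _).trans
            (add_le_add (prob_or_le hq0 hq1 _ _) (prob_exists_le hq0 hq1 _))
      _ ≤ 2 * exp (-(q / 120) * m) + Fintype.card κ * exp (-(3 / 80 * q ^ s * ρ) * m) := by
          grw [hA, hB, sum_le_sum fun k _ => hC k, sum_const, card_univ, nsmul_eq_mul]
          linarith
      _ < 1 := hsmall
  simp only [not_or, not_exists, not_le] at hω
  exact ⟨ω, hω.1.1, hω.1.2, hω.2⟩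

theorem exists_subset_sdiff_of_sum_exp_lt_one {κ : Type*} [Fintype κ] {ρ ε : ℝ} {s : ℕ}
    (hq0 : 0 ≤ q) (hq1 : q ≤ 1) (V₀ : Finset ι) (hV₀ : #V₀ ≤ ε * Fintype.card ι)
    (hε3 : ε ≤ 1 / 3) (hερ : ε ≤ ρ / 2) (𝓕 : κ → Finset (Finset ι))
    (h𝓕card : ∀ k, ρ * Fintype.card ι ≤ #(𝓕 k)) (h𝓕s : ∀ k, ∀ S ∈ 𝓕 k, #S = s)
    (h𝓕dis : ∀ k, (𝓕 k : Set (Finset ι)).PairwiseDisjoint id)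
    (hsmall : 2 * exp (-(q / 120) * Fintype.card ι) +
      Fintype.card κ * exp (-(3 / 80 * q ^ s * ρ) * Fintype.card ι) < 1) :
    ∃ X ⊆ univ \ V₀, q * Fintype.card ι / 2 ≤ #X ∧ #X ≤ 2 * (q * Fintype.card ι) ∧
      ∀ k, q ^ s * ρ * Fintype.card ι / 4 ≤ #{S ∈ 𝓕 k | S ⊆ X} := by
  have hW : (#(univ \ V₀) : ℝ) = Fintype.card ι - #V₀ := by
    rw [card_sdiff_of_subset (subset_univ V₀), card_univ, Nat.cast_sub (card_le_univ V₀)]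
  have hT (k : κ) : ρ * Fintype.card ι / 2 ≤ #{S ∈ 𝓕 k | Disjoint S V₀} := by
    have := card_le_card_filter_disjoint_add_card (h𝓕dis k) V₀
    have : (#(𝓕 k) : ℝ) ≤ #{S ∈ 𝓕 k | Disjoint S V₀} + #V₀ := by exact_mod_cast this
    nlinarith [h𝓕card k]
  obtain ⟨ω, hX₁, hX₂, hX₃⟩ := exists_selected_of_sum_exp_lt_one hq0 hq1 (univ \ V₀)
    (fun k => {S ∈ 𝓕 k | Disjoint S V₀}) (fun k => (h𝓕dis k).subset (filter_subset _ _))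
    (fun k S hS => h𝓕s k S (mem_filter.mp hS).1) (by rw [hW]; nlinarith)
    (by rw [hW]; linarith [Nat.cast_nonneg (α := ℝ) #V₀]) hT hsmall
  refine ⟨(univ \ V₀) ∩ selected ω, inter_subset_left, hX₁.le, hX₂.le,
    fun k => (hX₃ k).le.trans (Nat.cast_le.mpr (card_le_card fun S hS => ?_))⟩
  simp only [mem_filter] at hS ⊢
  exact ⟨hS.1.1, subset_inter (fun x hx => mem_sdiff.mpr ⟨mem_univ x, disjoint_left.mp hS.1.2 hx⟩)
    hS.2⟩

end RandomSubset

open RandomSubset in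
theorem random_subset_selection_general
    (b : ℕ) (hb : 2 ≤ b) (ρ : ℝ) (hρ : 0 < ρ)
    (ε : ℝ) (hε : ε < min (1 / 3) (ρ / 2)) :
    ∃ n₀ : ℕ, ∀ n : ℕ, n₀ ≤ n →
      ∀ V₀ : Finset (Fin n), (V₀.card : ℝ) ≤ ε * n →
      ∀ 𝓕 : Fin n → Finset (Finset (Fin n)),
        (∀ v, ρ * n ≤ ((𝓕 v).card : ℝ)) →
        (∀ v, ∀ S ∈ 𝓕 v, S.card = b - 1 ∧ v ∉ S) →
        (∀ v, ∀ S₁ ∈ 𝓕 v, ∀ S₂ ∈ 𝓕 v, S₁ ≠ S₂ → Disjoint S₁ S₂) →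
        ∃ X : Finset (Fin n), X ⊆ Finset.univ \ V₀ ∧
          ρ / (1300 * (b : ℝ) ^ 2) * n / 2 ≤ (X.card : ℝ) ∧
          (X.card : ℝ) ≤ 2 * (ρ / (1300 * (b : ℝ) ^ 2) * n) ∧
          ∀ v : Fin n,
            (ρ / (1300 * (b : ℝ) ^ 2)) ^ (b - 1) * ρ * n / 4 ≤
              (((𝓕 v).filter fun S => S ⊆ X).card : ℝ) := by
  set q := ρ / (1300 * (b : ℝ) ^ 2)
  have hq0 : 0 < q := by positivity
  obtain ⟨n₀, hn₀⟩ := ((eventually_ge_atTop 1).and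
    (eventually_two_mul_exp_add_mul_exp_lt_one (a := q / 120) (c := 3 / 80 * q ^ (b - 1) * ρ)
      (by positivity) (by positivity))).exists_forall_of_atTop
  refine ⟨n₀, fun n hn V₀ hV₀ 𝓕 h𝓕card h𝓕mem h𝓕dis => ?_⟩
  obtain ⟨hn1, hsmall⟩ := hn₀ n hn
  have hρ1 : ρ ≤ 1 := by
    have hcard := card_le_card_univ_of_pairwiseDisjoint (h𝓕dis ⟨0, hn1⟩) fun S hS =>
      card_pos.mp (by rw [(h𝓕mem _ S hS).1]; omega)
    rw [Fintype.card_fin] at hcard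
    have : (1 : ℝ) ≤ n := by exact_mod_cast hn1
    nlinarith [h𝓕card ⟨0, hn1⟩, (Nat.cast_le (α := ℝ)).mpr hcard]
  have hq1 : q ≤ 1 :=
    div_le_one_of_le₀ (by nlinarith [show (1 : ℝ) ≤ b by exact_mod_cast (by omega : 1 ≤ b)])
      (by positivity)
  simpa using exists_subset_sdiff_of_sum_exp_lt_one hq0.le hq1 V₀ (by simpa using hV₀)
    (hε.trans_le (min_le_left _ _)).le (hε.trans_le (min_le_right _ _)).le 𝓕
    (by simpa using h𝓕card) (fun v S hS => (h𝓕mem v S hS).1) h𝓕dis (by simpa using hsmall)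

/-- Let `b ≥ 2`, `ρ > 0`, `q = ρ/(1300 b²)`, and
`0 < ε < min{1/3, ρ/2}`. For all sufficiently large `n`: given `V₀ ⊆ V` with
`|V₀| ≤ εn` and, for every `v ∈ V`, a family `ℱ_v` of at least `ρn` pairwise disjoint
`(b-1)`-subsets of `V ∖ {v}`, there is `X ⊆ V ∖ V₀` with `qn/2 ≤ |X| ≤ 2qn` such that
for every `v` at least `q^{b-1} ρ n / 4` members of `ℱ_v` are contained in `X`. -/
theorem random_subset_selection
    (b : ℕ) (hb : 2 ≤ b) (ρ : ℝ) (hρ : 0 < ρ)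
    (ε : ℝ) (hε0 : 0 < ε) (hε : ε < min (1 / 3) (ρ / 2)) :
    ∃ n₀ : ℕ, ∀ n : ℕ, n₀ ≤ n →
      ∀ V₀ : Finset (Fin n), (V₀.card : ℝ) ≤ ε * n →
      ∀ 𝓕 : Fin n → Finset (Finset (Fin n)),
        (∀ v, ρ * n ≤ ((𝓕 v).card : ℝ)) →
        (∀ v, ∀ S ∈ 𝓕 v, S.card = b - 1 ∧ v ∉ S) →
        (∀ v, ∀ S₁ ∈ 𝓕 v, ∀ S₂ ∈ 𝓕 v, S₁ ≠ S₂ → Disjoint S₁ S₂) →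
        ∃ X : Finset (Fin n), X ⊆ Finset.univ \ V₀ ∧
          ρ / (1300 * (b : ℝ) ^ 2) * n / 2 ≤ (X.card : ℝ) ∧
          (X.card : ℝ) ≤ 2 * (ρ / (1300 * (b : ℝ) ^ 2) * n) ∧
          ∀ v : Fin n,
            (ρ / (1300 * (b : ℝ) ^ 2)) ^ (b - 1) * ρ * n / 4 ≤
              (((𝓕 v).filter fun S => S ⊆ X).card : ℝ) :=
  random_subset_selection_general b hb ρ hρ ε hε
end

section
/- For every k-graph F with at least one edge, α_F = min_{v ∈ V(F)} π(F'_v), where F'_v := { e∖{v} : e ∈ E(F_v) } is the link (k−1)-graph of v in F and π denotes the Turán density: π(G) = lim_{n→∞} ex(n,G)·C(n,k−1)^{−1}, with ex(n,G) the maximum number of edges of a (k−1)-graph on n vertices containing no copy of G. -/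
open Finset Filter Topology

/-!
For a vertex `v` with link `L = F'_v`, deleting a vertex from an extremal `L`-free graph and
averaging shows that `ex(n, L) / C(n, k-1)` is non-increasing, so it converges to some `π_v`;
it remains to show `inf Λ_{F,v} = π_v`. An embedding of `F_v` sending `v` to `w` is the same as
a copy of `L` in the link of `w` (with `v`, which lies in no edge of `L`, sent to `w`).

If `δ(H) ≥ (π_v + ε) C(n-1, k-1)`, the link of `w` is denser than `ex(m, L) / C(m, k-1)` for a
fixed `m`, so a positive proportion of its `m`-sets contain a copy of `L`. Each copy lies in
`O(n^(m-b))` of them, which gives `Ω(n^b)` copies and hence `Ω(n^(b-1))` embeddings.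
Conversely, take an extremal `L`-free graph `B` on `N` vertices, all `k`-sets of these vertices,
and a new apex whose link is `B`. Its minimum degree is about `π_v C(N, k-1)`, and no embedding
of `F_v` sends `v` to the apex.
-/

lemma Function.Injective.update_of_forall_ne {α β : Type*} [DecidableEq α] {g : α → β}
    (hg : Function.Injective g) {v : α} {w : β} (hw : ∀ x ≠ v, g x ≠ w) :
    Function.Injective (Function.update g v w) := by
  intro x y hxy
  by_cases hx : x = v <;> by_cases hy : y = v
  · rw [hx, hy]
  · rw [hx, Function.update_self, Function.update_of_ne hy] at hxy
    exact absurd hxy.symm (hw y hy)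
  · rw [hy, Function.update_self, Function.update_of_ne hx] at hxy
    exact absurd hxy (hw x hx)
  · rw [Function.update_of_ne hx, Function.update_of_ne hy] at hxy
    exact hg hxy

lemma mul_choose_succ_le_choose {β : ℝ} {N j : ℕ} (hj : j ≤ N + 1)
    (h : (j : ℝ) ≤ (1 - β) * (N + 1)) : β * (N + 1).choose j ≤ N.choose j := by
  have hid : (N.choose j : ℝ) * (N + 1) = (N + 1).choose j * (N + 1 - j) := by
    have := Nat.choose_mul_succ_eq N j
    rw [← Nat.cast_inj (R := ℝ)] at this
    push_cast [Nat.cast_sub hj] at this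
    exact this
  have hC : (0 : ℝ) ≤ (N + 1).choose j := Nat.cast_nonneg _
  refine le_of_mul_le_mul_right ?_ (by positivity : (0 : ℝ) < N + 1)
  rw [hid]
  nlinarith [mul_le_mul_of_nonneg_left h hC]

lemma pow_le_two_pow_mul_factorial_mul_choose {n b : ℕ} (h : 2 * b ≤ n) :
    n ^ b ≤ 2 ^ b * b.factorial * (n - 1).choose b :=
  calc n ^ b ≤ (2 * (n - 1 + 1 - b)) ^ b := Nat.pow_le_pow_left (by omega) b
    _ = 2 ^ b * (n - 1 + 1 - b) ^ b := mul_pow _ _ _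
    _ ≤ 2 ^ b * (n - 1).descFactorial b :=
        Nat.mul_le_mul_left _ (Nat.pow_sub_le_descFactorial _ _)
    _ = 2 ^ b * b.factorial * (n - 1).choose b := by
        rw [Nat.descFactorial_eq_factorial_mul_choose, mul_assoc]

lemma div_mul_pow_le_of_mul_choose_le {δ E : ℝ} {n m b : ℕ} (hδ : 0 ≤ δ) (hb : 0 < b)
    (hbm : b ≤ m) (hmn : m < n) (hbn : 2 * b ≤ n)
    (h : δ * (n - 1).choose m ≤ E * n * (n - 1 - b).choose (m - b)) :
    δ / (2 ^ b * b.factorial * m.choose b) * n ^ (b - 1) ≤ E := by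
  have hid : ((n - 1).choose m * m.choose b : ℝ) =
      (n - 1).choose b * (n - 1 - b).choose (m - b) := by
    exact_mod_cast Nat.choose_mul hbm
  have hpow : (n : ℝ) ^ b ≤ 2 ^ b * b.factorial * (n - 1).choose b := by
    exact_mod_cast pow_le_two_pow_mul_factorial_mul_choose hbn
  have hC : (0 : ℝ) < (n - 1 - b).choose (m - b) := by exact_mod_cast Nat.choose_pos (by omega)
  have hCmb : (0 : ℝ) < m.choose b := by exact_mod_cast Nat.choose_pos hbm
  have hn : (0 : ℝ) < n := by exact_mod_cast (by omega : 0 < n)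
  rw [div_mul_eq_mul_div, div_le_iff₀ (by positivity)]
  refine le_of_mul_le_mul_right ?_ (mul_pos hn hC)
  calc δ * n ^ (b - 1) * (n * (n - 1 - b).choose (m - b))
      = δ * n ^ b * (n - 1 - b).choose (m - b) := by
        rw [← pow_sub_one_mul hb.ne' (n : ℝ)]; ring
    _ ≤ δ * (2 ^ b * b.factorial * (n - 1).choose b) * (n - 1 - b).choose (m - b) := by
        gcongr
    _ = 2 ^ b * b.factorial * (δ * (n - 1).choose m * m.choose b) := by
        rw [mul_assoc δ (((n - 1).choose m : ℕ) : ℝ), hid]; ring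
    _ ≤ 2 ^ b * b.factorial * (E * n * (n - 1 - b).choose (m - b) * m.choose b) := by
        gcongr
    _ = E * (2 ^ b * b.factorial * m.choose b) * (n * (n - 1 - b).choose (m - b)) := by ring

section Copies

variable {b n m k : ℕ}

def CopyFree (L : Finset (Finset (Fin b))) (H : Finset (Finset (Fin n))) : Prop :=
  ¬ ∃ f, IsCopyIn L H f

def comapEdges (j : Fin n → Fin m) (G : Finset (Finset (Fin m))) : Finset (Finset (Fin n)) :=
  univ.filter fun e => e.image j ∈ G

variable {j : Fin n → Fin m} {G : Finset (Finset (Fin m))}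

lemma card_of_mem_comapEdges (hj : Function.Injective j) (hG : ∀ e ∈ G, e.card = k)
    {e : Finset (Fin n)} (he : e ∈ comapEdges j G) : e.card = k := by
  rw [← card_image_of_injective e hj]
  exact hG _ (mem_filter.1 he).2

lemma IsCopyIn.comp_of_comapEdges {L : Finset (Finset (Fin b))} {g : Fin b → Fin n}
    (hj : Function.Injective j) (hg : IsCopyIn L (comapEdges j G) g) :
    IsCopyIn L G (j ∘ g) :=
  ⟨hj.comp hg.1, fun e he => by rw [← image_image]; exact (mem_filter.1 (hg.2 e he)).2⟩

lemma card_filter_subset_le_card_comapEdges :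
    #(G.filter (· ⊆ univ.image j)) ≤ #(comapEdges j G) := by
  classical
  refine le_trans (card_le_card fun e he => ?_) (card_image_le (f := image j))
  obtain ⟨heG, hej⟩ := mem_filter.1 he
  have hpre : (univ.filter fun y => j y ∈ e).image j = e := by
    ext x
    simp only [mem_image, mem_filter, mem_univ, true_and]
    exact ⟨fun ⟨y, hy, hyx⟩ => hyx ▸ hy, fun hx => by
      obtain ⟨y, -, hy⟩ := mem_image.1 (hej hx); exact ⟨y, hy ▸ hx, hy⟩⟩
  exact mem_image.2 ⟨_, mem_filter.2 ⟨mem_univ _, by rwa [hpre]⟩, hpre⟩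

lemma exists_isCopyIn_forall_ne {L : Finset (Finset (Fin b))}
    {G : Finset (Finset (Fin n))} {w : Fin n} (hw : ∀ e ∈ G, w ∉ e) (hbn : b < n)
    {f : Fin b → Fin n} (hf : IsCopyIn L G f) :
    ∃ f', IsCopyIn L G f' ∧ ∀ x, f' x ≠ w := by
  obtain ⟨y, -, hy⟩ := exists_mem_notMem_of_card_lt_card (s := univ.image f) (t := univ)
    (card_image_le.trans_lt (by simpa using hbn))
  -- `w` hosts only a vertex of `L` lying in no edge, so it can be moved to the free vertex `y`
  refine ⟨Equiv.swap w y ∘ f, ⟨(Equiv.injective _).comp hf.1, fun e he => ?_⟩,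
    fun x hx => ?_⟩
  · have hfix : ∀ z ∈ e.image f, Equiv.swap w y z = z := fun z hz =>
      Equiv.swap_apply_of_ne_of_ne (ne_of_mem_of_not_mem hz (hw _ (hf.2 e he)))
        (ne_of_mem_of_not_mem (image_subset_image (subset_univ e) hz) hy)
    rw [← image_image, image_congr hfix, image_id']
    exact hf.2 e he
  · rw [Function.comp_apply, Equiv.swap_apply_eq_iff, Equiv.swap_apply_left] at hx
    exact hy (hx ▸ mem_image_of_mem f (mem_univ x))

end Copies

section TuranNumber

variable {b n k' : ℕ} (L : Finset (Finset (Fin b)))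

lemma card_le_choose_of_forall_card_eq {H : Finset (Finset (Fin n))}
    (hH : ∀ e ∈ H, e.card = k') : H.card ≤ n.choose k' :=
  calc H.card ≤ #((univ : Finset (Fin n)).powersetCard k') :=
        card_le_card fun e he => mem_powersetCard.2 ⟨subset_univ e, hH e he⟩
    _ = n.choose k' := by simp

lemma choose_mem_upperBounds_exNum_set :
    n.choose k' ∈ upperBounds {m : ℕ | ∃ H : Finset (Finset (Fin n)),
      (∀ e ∈ H, e.card = k') ∧ CopyFree L H ∧ m = H.card} := by
  rintro _ ⟨H, hH, -, rfl⟩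
  exact card_le_choose_of_forall_card_eq hH

variable {L}

lemma card_le_exNum {H : Finset (Finset (Fin n))} (hH : ∀ e ∈ H, e.card = k')
    (hfree : CopyFree L H) : H.card ≤ exNum n k' L :=
  le_csSup ⟨_, choose_mem_upperBounds_exNum_set L⟩ ⟨H, hH, hfree, rfl⟩

lemma exists_card_eq_exNum (h : 0 < exNum n k' L) :
    ∃ H : Finset (Finset (Fin n)), (∀ e ∈ H, e.card = k') ∧ CopyFree L H ∧
      H.card = exNum n k' L := by
  have hne : {m : ℕ | ∃ H : Finset (Finset (Fin n)), (∀ e ∈ H, e.card = k') ∧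
      CopyFree L H ∧ m = H.card}.Nonempty :=
    Set.nonempty_iff_ne_empty.2 fun he => h.ne' (by rw [exNum]; exact he ▸ csSup_empty)
  obtain ⟨H, hH, hfree, hcard⟩ := Nat.sSup_mem hne ⟨_, choose_mem_upperBounds_exNum_set L⟩
  exact ⟨H, hH, hfree, hcard.symm⟩

lemma exNum_le_choose : exNum n k' L ≤ n.choose k' :=
  csSup_le' (choose_mem_upperBounds_exNum_set L)

lemma exists_isCopyIn_of_exNum_lt {m : ℕ} {j : Fin n → Fin m} {G : Finset (Finset (Fin m))}
    (hj : Function.Injective j) (hG : ∀ e ∈ G, e.card = k')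
    (h : exNum n k' L < #(G.filter (· ⊆ univ.image j))) :
    ∃ f, IsCopyIn L G f ∧ ∀ x, f x ∈ univ.image j := by
  have hcopy : ¬ CopyFree L (comapEdges j G) := fun hfree =>
    (card_filter_subset_le_card_comapEdges.trans
      (card_le_exNum (fun e he => card_of_mem_comapEdges hj hG he) hfree)).not_gt h
  obtain ⟨g, hg⟩ := not_not.1 hcopy
  exact ⟨j ∘ g, hg.comp_of_comapEdges hj, fun x => mem_image_of_mem j (mem_univ _)⟩

end TuranNumber

section TuranDensity

variable {b k' : ℕ} {L : Finset (Finset (Fin b))}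

lemma sub_mul_exNum_succ_le (n : ℕ) :
    (n + 1 - k') * exNum (n + 1) k' L ≤ (n + 1) * exNum n k' L := by
  classical
  rcases Nat.eq_zero_or_pos (exNum (n + 1) k' L) with h | h
  · simp [h]
  obtain ⟨H, hH, hfree, hcard⟩ := exists_card_eq_exNum h
  have hdel : ∀ u : Fin (n + 1), #(H.filter (u ∉ ·)) ≤ exNum n k' L := fun u => by
    have hsub : H.filter (u ∉ ·) = H.filter (· ⊆ univ.image u.succAbove) := by
      simp [Fin.image_succAbove_univ, subset_compl_singleton]
    rw [hsub]
    by_contra hlt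
    obtain ⟨f, hf, -⟩ := exists_isCopyIn_of_exNum_lt Fin.succAbove_right_injective hH
      (not_le.1 hlt)
    exact hfree ⟨f, hf⟩
  have hcount : ∑ u : Fin (n + 1), #(H.filter (u ∉ ·)) = H.card * (n + 1 - k') := by
    rw [← Finset.sum_const_nat fun e he => ?_]
    · exact sum_card_bipartiteAbove_eq_sum_card_bipartiteBelow (r := fun u e => u ∉ e)
    · simp [bipartiteBelow, filter_notMem_eq_sdiff, card_sdiff, hH e he]
  calc (n + 1 - k') * exNum (n + 1) k' L = ∑ u : Fin (n + 1), #(H.filter (u ∉ ·)) := by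
        rw [hcount, hcard, mul_comm]
    _ ≤ ∑ _u : Fin (n + 1), exNum n k' L := sum_le_sum fun u _ => hdel u
    _ = (n + 1) * exNum n k' L := by simp

noncomputable def turanRatio (L : Finset (Finset (Fin b))) (k' n : ℕ) : ℝ :=
  exNum n k' L / n.choose k'

/-- `turanRatio L k'` is antitone from `k'` on, so this is its limit (`tendsto_turanRatio`). -/
noncomputable def turanDensity (L : Finset (Finset (Fin b))) (k' : ℕ) : ℝ :=
  ⨅ i : ℕ, turanRatio L k' (i + k')

lemma turanRatio_nonneg (n : ℕ) : 0 ≤ turanRatio L k' n := by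
  unfold turanRatio; positivity

lemma turanRatio_le_one (n : ℕ) : turanRatio L k' n ≤ 1 :=
  div_le_one_of_le₀ (by exact_mod_cast exNum_le_choose) (Nat.cast_nonneg _)

lemma turanRatio_succ_le {n : ℕ} (h : k' ≤ n) :
    turanRatio L k' (n + 1) ≤ turanRatio L k' n := by
  have hpos : 0 < n.choose k' := Nat.choose_pos h
  rw [turanRatio, turanRatio, div_le_div_iff₀ (by exact_mod_cast Nat.choose_pos (by omega))
    (by exact_mod_cast hpos)]
  have key : exNum (n + 1) k' L * n.choose k' * (n + 1) ≤
      exNum n k' L * (n + 1).choose k' * (n + 1) := by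
    calc exNum (n + 1) k' L * n.choose k' * (n + 1)
        = (n + 1 - k') * exNum (n + 1) k' L * (n + 1).choose k' := by
          rw [mul_assoc, Nat.choose_mul_succ_eq]; ring
      _ ≤ (n + 1) * exNum n k' L * (n + 1).choose k' :=
          Nat.mul_le_mul_right _ (sub_mul_exNum_succ_le n)
      _ = exNum n k' L * (n + 1).choose k' * (n + 1) := by ring
  exact_mod_cast Nat.le_of_mul_le_mul_right key n.succ_pos

lemma antitone_turanRatio_add : Antitone fun i => turanRatio L k' (i + k') :=
  antitone_nat_of_succ_le fun i => by
    rw [add_right_comm]; exact turanRatio_succ_le (by omega)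

lemma bddBelow_range_turanRatio_add : BddBelow (Set.range fun i => turanRatio L k' (i + k')) :=
  ⟨0, by rintro _ ⟨i, rfl⟩; exact turanRatio_nonneg _⟩

lemma tendsto_turanRatio : Tendsto (turanRatio L k') atTop (𝓝 (turanDensity L k')) :=
  (tendsto_add_atTop_iff_nat k').1
    (tendsto_atTop_ciInf antitone_turanRatio_add bddBelow_range_turanRatio_add)

lemma turanDensity_le_turanRatio {n : ℕ} (h : k' ≤ n) :
    turanDensity L k' ≤ turanRatio L k' n := by
  have := ciInf_le (bddBelow_range_turanRatio_add (L := L) (k' := k')) (n - k')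
  rwa [Nat.sub_add_cancel h] at this

lemma turanDensity_nonneg : 0 ≤ turanDensity L k' :=
  le_ciInf fun _ => turanRatio_nonneg _

lemma turanDensity_le_one : turanDensity L k' ≤ 1 :=
  (turanDensity_le_turanRatio le_rfl).trans (turanRatio_le_one _)

end TuranDensity

section Links

variable {b n : ℕ}

lemma notMem_of_mem_linkAt {F : Finset (Finset (Fin b))} {v : Fin b} {e : Finset (Fin b)}
    (he : e ∈ linkAt F v) : v ∉ e := by
  obtain ⟨e₀, -, rfl⟩ := mem_image.1 he
  exact notMem_erase v e₀

lemma card_of_mem_linkAt {k : ℕ} {H : Finset (Finset (Fin n))} (hH : ∀ e ∈ H, e.card = k)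
    {w : Fin n} {e : Finset (Fin n)} (he : e ∈ linkAt H w) : e.card = k - 1 := by
  obtain ⟨e₀, he₀, rfl⟩ := mem_image.1 he
  obtain ⟨he₀H, hw⟩ := mem_filter.1 he₀
  rw [card_erase_of_mem hw, hH _ he₀H]

lemma card_linkAt (H : Finset (Finset (Fin n))) (w : Fin n) : #(linkAt H w) = degH H w :=
  card_image_of_injOn fun e₁ h₁ e₂ h₂ h => by
    rw [← insert_erase (mem_filter.1 h₁).2, ← insert_erase (mem_filter.1 h₂).2]
    exact congrArg (insert w) h

lemma forall_image_mem_iff_linkAt {F : Finset (Finset (Fin b))} {H : Finset (Finset (Fin n))}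
    {v : Fin b} {f : Fin b → Fin n} (hf : Function.Injective f) :
    (∀ e ∈ F, v ∈ e → e.image f ∈ H) ↔
      ∀ e ∈ linkAt F v, e.image f ∈ linkAt H (f v) := by
  constructor
  · intro h _ he'
    obtain ⟨e, he, rfl⟩ := mem_image.1 he'
    obtain ⟨heF, hv⟩ := mem_filter.1 he
    rw [image_erase hf]
    exact mem_image_of_mem _ (mem_filter.2 ⟨h e heF hv, mem_image_of_mem f hv⟩)
  · intro h e heF hv
    obtain ⟨e', he', heq⟩ := mem_image.1 (h _ (mem_image_of_mem _ (mem_filter.2 ⟨heF, hv⟩)))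
    rw [image_erase hf] at heq
    rw [← insert_erase (mem_image_of_mem f hv), ← heq, insert_erase (mem_filter.1 he').2]
    exact (mem_filter.1 he').1

end Links

section Cone

variable {b k N : ℕ} {B : Finset (Finset (Fin N))}

def coneGraph (k : ℕ) (B : Finset (Finset (Fin N))) : Finset (Finset (Fin (N + 1))) :=
  (allEdges (N + 1) k).filter (0 ∉ ·) ∪ B.image fun e => insert 0 (e.image Fin.succ)

lemma zero_notMem_image_succ (e : Finset (Fin N)) : (0 : Fin (N + 1)) ∉ e.image Fin.succ := by
  simp [Fin.succ_ne_zero]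

lemma card_of_mem_coneGraph (hk : 1 ≤ k) (hB : ∀ e ∈ B, e.card = k - 1)
    {e : Finset (Fin (N + 1))} (he : e ∈ coneGraph k B) : e.card = k := by
  rcases mem_union.1 he with he | he
  · exact (mem_powersetCard.1 (mem_filter.1 he).1).2
  · obtain ⟨e₀, he₀, rfl⟩ := mem_image.1 he
    rw [card_insert_of_notMem (zero_notMem_image_succ e₀),
      card_image_of_injective _ (Fin.succ_injective _), hB _ he₀]
    omega

lemma filter_zero_mem_coneGraph :
    (coneGraph k B).filter (0 ∈ ·) = B.image fun e => insert 0 (e.image Fin.succ) := by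
  ext e
  simp only [coneGraph, mem_filter, mem_union]
  constructor
  · rintro ⟨⟨-, h⟩ | h, h0⟩
    · exact absurd h0 h
    · exact h
  · intro h
    obtain ⟨e₀, -, rfl⟩ := mem_image.1 h
    exact ⟨Or.inr h, mem_insert_self _ _⟩

lemma linkAt_coneGraph_zero : linkAt (coneGraph k B) 0 = B.image (image Fin.succ) := by
  rw [linkAt, filter_zero_mem_coneGraph, image_image]
  exact image_congr fun e _ => erase_insert (zero_notMem_image_succ e)

lemma degH_coneGraph_zero : degH (coneGraph k B) 0 = #B := by
  rw [← card_linkAt, linkAt_coneGraph_zero,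
    card_image_of_injective _ (image_injective (Fin.succ_injective _))]

lemma choose_le_degH_coneGraph (hk : 1 ≤ k) {u : Fin (N + 1)} (hu : u ≠ 0) :
    (N - 1).choose (k - 1) ≤ degH (coneGraph k B) u := by
  have hsub : ((univ.erase 0).powersetCard k).filter ({u} ⊆ ·) ⊆
      (coneGraph k B).filter (u ∈ ·) := by
    intro e he
    simp only [mem_filter, mem_powersetCard, singleton_subset_iff] at he
    refine mem_filter.2 ⟨mem_union_left _ (mem_filter.2
      ⟨mem_powersetCard.2 ⟨subset_univ _, he.1.2⟩, fun h0 => ?_⟩), he.2⟩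
    exact (mem_erase.1 (he.1.1 h0)).1 rfl
  have := card_le_card hsub
  rwa [card_filter_powersetCard_subset _ _ _ (by simpa using hu) (by simpa using hk),
    card_singleton, card_erase_of_mem (mem_univ _), card_univ, Fintype.card_fin,
    Nat.add_sub_cancel] at this

lemma embCount_coneGraph_zero {F : Finset (Finset (Fin b))} {v : Fin b}
    (hB : CopyFree (linkAt F v) B) (hbN : b ≤ N) : embCount k b F v (coneGraph k B) 0 = 0 := by
  refine card_eq_zero.2 (eq_empty_of_forall_notMem fun f hmem => ?_)
  simp only [mem_filter, mem_univ, true_and] at hmem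
  obtain ⟨hf, hfv, hedges⟩ := hmem
  have hcopy : IsCopyIn (linkAt F v) (B.image (image Fin.succ)) f := by
    refine ⟨hf, ?_⟩
    rw [← linkAt_coneGraph_zero, ← hfv]
    exact (forall_image_mem_iff_linkAt hf).1 hedges
  obtain ⟨f', hf', hf'0⟩ := exists_isCopyIn_forall_ne
    (by simp only [mem_image]; rintro _ ⟨e, -, rfl⟩; exact zero_notMem_image_succ e)
    (by omega) hcopy
  choose g hg using fun x => Fin.exists_succ_eq_of_ne_zero (hf'0 x)
  have hf'g : f' = Fin.succ ∘ g := funext fun x => (hg x).symm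
  refine hB ⟨g, fun x y hxy => hf'.1 (by rw [← hg x, ← hg y, hxy]), fun e he => ?_⟩
  have := hf'.2 e he
  rw [hf'g, ← image_image] at this
  exact (image_injective (Fin.succ_injective _)).mem_finset_image.1 this

lemma turanDensity_le_of_mem_lambdaSet (hk : 1 ≤ k) {F : Finset (Finset (Fin b))}
    {v : Fin b} {a : ℝ} (ha : a ∈ LambdaSet k b F v) :
    turanDensity (linkAt F v) (k - 1) ≤ a := by
  set π := turanDensity (linkAt F v) (k - 1)
  by_contra! hlt
  set β := a + (π - a) / 2 with hβ_def
  have hβπ : β < π := by linarith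
  have hβ : 0 < β := by linarith [ha.1]
  obtain ⟨ε', hε', n₀, hΛ⟩ := ha.2 ((π - a) / 2) (by linarith)
  obtain ⟨c, hc⟩ := exists_nat_ge ((k - 1 : ℕ) / (1 - β) : ℝ)
  set M := n₀ + b + k + c
  have hchoose : (0 : ℝ) < (M + 1).choose (k - 1) := by
    exact_mod_cast Nat.choose_pos (by omega)
  have hex : β * (M + 1).choose (k - 1) ≤ exNum (M + 1) (k - 1) (linkAt F v) := by
    have := (hβπ.le.trans (turanDensity_le_turanRatio (by omega : k - 1 ≤ M + 1)))
    rwa [turanRatio, le_div_iff₀ hchoose] at this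
  obtain ⟨B, hB, hfree, hcard⟩ := exists_card_eq_exNum (n := M + 1) (k' := k - 1)
    (L := linkAt F v) (by exact_mod_cast (by positivity : (0 : ℝ) < β * _).trans_le hex)
  have hdeg : ∀ u, β * ((M + 2 - 1).choose (k - 1) : ℝ) ≤ degH (coneGraph k B) u := by
    intro u
    rw [show M + 2 - 1 = M + 1 by omega]
    rcases eq_or_ne u 0 with rfl | hu
    · rw [degH_coneGraph_zero, hcard]
      exact hex
    · refine (mul_choose_succ_le_choose (by omega) ?_).trans
        (by exact_mod_cast choose_le_degH_coneGraph hk hu)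
      have h1β : 0 < 1 - β := by linarith [turanDensity_le_one (L := linkAt F v) (k' := k - 1)]
      rw [div_le_iff₀ h1β] at hc
      have : (c : ℝ) ≤ M + 1 := by exact_mod_cast (by omega : c ≤ M + 1)
      nlinarith
  have hemb := hΛ (M + 2) (by omega) _ (fun e he => card_of_mem_coneGraph hk hB he) hdeg 0
  rw [embCount_coneGraph_zero hfree (by omega), Nat.cast_zero] at hemb
  exact hemb.not_gt (by positivity)

end Cone

section Supersaturation

variable {b n k' m : ℕ} {L : Finset (Finset (Fin b))} {G : Finset (Finset (Fin n))}
  {U : Finset (Fin n)}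

noncomputable def richSets (L : Finset (Finset (Fin b))) (k' : ℕ) (G : Finset (Finset (Fin n)))
    (U : Finset (Fin n)) (m : ℕ) : Finset (Finset (Fin n)) :=
  (U.powersetCard m).filter fun S => exNum m k' L < #(G.filter (· ⊆ S))

open Classical in
noncomputable def copiesIn (L : Finset (Finset (Fin b))) (G : Finset (Finset (Fin n)))
    (U : Finset (Fin n)) : Finset (Fin b → Fin n) :=
  univ.filter fun g => IsCopyIn L G g ∧ ∀ x, g x ∈ U

lemma sum_card_filter_subset_le (hG : ∀ e ∈ G, e.card = k') :
    ∑ S ∈ U.powersetCard m, #(G.filter (· ⊆ S)) ≤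
      #(richSets L k' G U m) * m.choose k' + (#U).choose m * exNum m k' L := by
  rw [← sum_filter_add_sum_filter_not (U.powersetCard m)
    fun S => exNum m k' L < #(G.filter (· ⊆ S))]
  gcongr
  · refine sum_le_card_nsmul _ _ _ fun S hS => ?_
    obtain ⟨-, hScard⟩ := mem_powersetCard.1 (mem_filter.1 hS).1
    calc #(G.filter (· ⊆ S)) ≤ #(S.powersetCard k') := card_le_card fun e he =>
          mem_powersetCard.2 ⟨(mem_filter.1 he).2, hG e (mem_filter.1 he).1⟩
      _ = m.choose k' := by rw [card_powersetCard, hScard]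
  · calc _ ≤ ∑ _S ∈ U.powersetCard m, exNum m k' L :=
          (sum_le_sum fun S hS => not_lt.1 (mem_filter.1 hS).2).trans
            (sum_le_sum_of_subset (filter_subset _ _))
      _ = (#U).choose m * exNum m k' L := by rw [sum_const, card_powersetCard, smul_eq_mul]

lemma mul_choose_le_card_richSets (hG : ∀ e ∈ G, e.card = k' ∧ e ⊆ U) (hm : k' ≤ m)
    {δ : ℝ} (hδ : (turanRatio L k' m + δ) * (#U).choose k' ≤ #G) :
    δ * (#U).choose m ≤ #(richSets L k' G U m) := by
  classical
  have hsum : ∑ S ∈ U.powersetCard m, #(G.filter (· ⊆ S)) =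
      #G * (#U - k').choose (m - k') := by
    have := sum_card_bipartiteAbove_eq_sum_card_bipartiteBelow (s := U.powersetCard m) (t := G)
      (r := fun S e => e ⊆ S)
    simp only [bipartiteAbove, bipartiteBelow] at this
    rw [this]
    refine sum_const_nat fun e he => ?_
    rw [card_filter_powersetCard_subset _ _ _ (hG e he).2
      ((hG e he).1 ▸ hm), (hG e he).1]
  have hcount := sum_card_filter_subset_le (L := L) (U := U) (m := m) fun e he => (hG e he).1
  rw [hsum] at hcount
  have hid : ((#U).choose m * m.choose k' : ℝ) = (#U).choose k' * (#U - k').choose (m - k') := by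
    exact_mod_cast Nat.choose_mul hm
  have hCm : (0 : ℝ) < m.choose k' := by exact_mod_cast Nat.choose_pos hm
  have hex : (exNum m k' L : ℝ) = turanRatio L k' m * m.choose k' := by
    rw [turanRatio, div_mul_cancel₀ _ hCm.ne']
  have hcount' : (#G * (#U - k').choose (m - k') : ℝ) ≤
      #(richSets L k' G U m) * m.choose k' + (#U).choose m * exNum m k' L := by
    exact_mod_cast hcount
  have hδ' := mul_le_mul_of_nonneg_right hδ (Nat.cast_nonneg ((#U - k').choose (m - k')))
  rw [hex] at hcount'
  refine le_of_mul_le_mul_right ?_ hCm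
  calc δ * (#U).choose m * m.choose k'
      = (turanRatio L k' m + δ) * (#U).choose k' * (#U - k').choose (m - k')
        - turanRatio L k' m * ((#U).choose m * m.choose k') := by
          rw [mul_assoc (turanRatio L k' m + δ), ← hid]; ring
    _ ≤ #(richSets L k' G U m) * m.choose k' := by linarith

lemma card_richSets_le (hG : ∀ e ∈ G, e.card = k') (hbm : b ≤ m) :
    #(richSets L k' G U m) ≤ #(copiesIn L G U) * (#U - b).choose (m - b) := by
  classical
  have hsub : richSets L k' G U m ⊆ (copiesIn L G U).biUnion fun g =>
      (U.powersetCard m).filter (univ.image g ⊆ ·) := by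
    intro S hS
    obtain ⟨hSm, hrich⟩ := mem_filter.1 hS
    obtain ⟨hSU, hScard⟩ := mem_powersetCard.1 hSm
    obtain ⟨f, hf, hfS⟩ := exists_isCopyIn_of_exNum_lt (S.orderEmbOfFin hScard).injective hG
      (by rwa [image_orderEmbOfFin_univ])
    rw [image_orderEmbOfFin_univ] at hfS
    refine mem_biUnion.2 ⟨f, ?_, mem_filter.2 ⟨hSm, ?_⟩⟩
    · simp only [copiesIn, mem_filter, mem_univ, true_and]
      exact ⟨hf, fun x => hSU (hfS x)⟩
    · rintro _ hy
      obtain ⟨x, -, rfl⟩ := mem_image.1 hy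
      exact hfS x
  refine (card_le_card hsub).trans (card_biUnion_le.trans (sum_le_card_nsmul _ _ _ fun g hg => ?_))
  simp only [copiesIn, mem_filter, mem_univ, true_and] at hg
  have hcard : #(univ.image g) = b := by
    rw [card_image_of_injective _ hg.1.1, card_univ, Fintype.card_fin]
  have himg : univ.image g ⊆ U := by
    rintro _ hy
    obtain ⟨x, -, rfl⟩ := mem_image.1 hy
    exact hg.2 x
  rw [card_filter_powersetCard_subset _ _ _ himg (by rw [hcard]; exact hbm), hcard]

lemma card_copiesIn_linkAt_le {k : ℕ} {F : Finset (Finset (Fin b))} {v : Fin b}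
    (H : Finset (Finset (Fin n))) (w : Fin n) :
    #(copiesIn (linkAt F v) (linkAt H w) (univ.erase w)) ≤ embCount k b F v H w * n := by
  classical
  rw [embCount]
  -- a copy `g` is recovered from the embedding `update g v w` together with `g v`
  calc _ ≤ #((univ.filter fun f : Fin b → Fin n => Function.Injective f ∧ f v = w ∧
          ∀ e ∈ F, v ∈ e → e.image f ∈ H) ×ˢ (univ : Finset (Fin n))) := by
        refine card_le_card_of_injOn (fun g => (Function.update g v w, g v)) (fun g hg => ?_) ?_
        · simp only [copiesIn, coe_filter, mem_univ, true_and, Set.mem_ofPred_eq, mem_erase]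
            at hg
          obtain ⟨⟨hg, hedges⟩, hgw⟩ := hg
          have hinj := hg.update_of_forall_ne (v := v) fun x _ => (hgw x).1
          simp only [coe_product, coe_filter, Set.mem_prod, Set.mem_ofPred_eq, mem_univ, true_and,
            coe_univ, Set.mem_univ, and_true]
          refine ⟨hinj, Function.update_self v w g, ?_⟩
          rw [forall_image_mem_iff_linkAt hinj, Function.update_self]
          intro e he
          rw [image_congr fun x hx => Function.update_of_ne
            (ne_of_mem_of_not_mem hx (notMem_of_mem_linkAt he)) w g]
          exact hedges e he
        · intro g₁ _ g₂ _ h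
          simp only [Prod.mk.injEq] at h
          funext x
          rcases eq_or_ne x v with rfl | hx
          · exact h.2
          · simpa [Function.update_of_ne hx] using congrFun h.1 x
    _ = _ := by rw [card_product, card_univ, Fintype.card_fin]; congr

lemma mem_lambdaSet_of_turanDensity_lt {k : ℕ} {F : Finset (Finset (Fin b))} {v : Fin b}
    {a : ℝ} (ha : turanDensity (linkAt F v) (k - 1) < a) : a ∈ LambdaSet k b F v := by
  set L := linkAt F v
  set π := turanDensity L (k - 1)
  refine ⟨turanDensity_nonneg.trans_lt ha, fun ε hε => ?_⟩
  obtain ⟨m, hmπ, hm⟩ := ((tendsto_turanRatio.eventually (gt_mem_nhds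
    (by linarith : π < π + ε / 2))).and (eventually_ge_atTop (b + k))).exists
  have hCmb : (0 : ℝ) < m.choose b := by exact_mod_cast Nat.choose_pos (by omega)
  refine ⟨ε / 2 / (2 ^ b * b.factorial * m.choose b), by positivity, m + 2 * b + 1,
    fun n hn H hH hdeg w => ?_⟩
  set U := univ.erase w
  have hU : #U = n - 1 := by simp [U]
  have hG : ∀ e ∈ linkAt H w, e.card = k - 1 ∧ e ⊆ U := fun e he =>
    ⟨card_of_mem_linkAt hH he, fun x hx =>
      mem_erase.2 ⟨ne_of_mem_of_not_mem hx (notMem_of_mem_linkAt he), mem_univ _⟩⟩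
  have hrich := mul_choose_le_card_richSets (L := L) (m := m) hG (by omega) (δ := ε / 2) (by
    rw [card_linkAt, hU]
    exact le_trans (mul_le_mul_of_nonneg_right (by linarith) (Nat.cast_nonneg _)) (hdeg w))
  have hcopies := card_richSets_le (L := L) (U := U) (k' := k - 1) (fun e he => (hG e he).1)
    (by omega : b ≤ m)
  have hemb := card_copiesIn_linkAt_le (k := k) (F := F) (v := v) H w
  rw [hU] at hrich hcopies
  have hcount : ε / 2 * (n - 1).choose m ≤
      (embCount k b F v H w * n : ℝ) * (n - 1 - b).choose (m - b) := by
    refine hrich.trans ?_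
    exact_mod_cast hcopies.trans (Nat.mul_le_mul_right _ hemb)
  exact div_mul_pow_le_of_mul_choose_le (by positivity) (Fin.pos v) (by omega) (by omega)
    (by omega) hcount

end Supersaturation

lemma sInf_lambdaSet {k b : ℕ} (hk : 1 ≤ k) (F : Finset (Finset (Fin b))) (v : Fin b) :
    sInf (LambdaSet k b F v) = turanDensity (linkAt F v) (k - 1) :=
  csInf_eq_of_forall_ge_of_forall_gt_exists_lt
    ⟨_, mem_lambdaSet_of_turanDensity_lt (lt_add_one _)⟩
    (fun _ ha => turanDensity_le_of_mem_lambdaSet hk ha)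
    (fun _ hw => let ⟨a, hπa, haw⟩ := exists_between hw
      ⟨a, mem_lambdaSet_of_turanDensity_lt hπa, haw⟩)

theorem alphaF_eq_min_turan_density_general
    (k : ℕ) (hk : 2 ≤ k) (b : ℕ)
    (F : Finset (Finset (Fin b))) :
    ∃ π : Fin b → ℝ,
      (∀ v : Fin b,
        Tendsto
          (fun n : ℕ => (exNum n (k - 1) (linkAt F v) : ℝ) / ((n.choose (k - 1) : ℕ) : ℝ))
          atTop (𝓝 (π v))) ∧
      alphaF k b F = ⨅ v : Fin b, π v :=
  ⟨fun v => turanDensity (linkAt F v) (k - 1), fun _ => tendsto_turanRatio,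
    iInf_congr fun v => sInf_lambdaSet (by omega) F v⟩

/-- remark in Section 6. For every `k`-graph `F` with at least one
edge, `α_F = min_{v ∈ V(F)} π(F'_v)`, where `F'_v` is the link `(k-1)`-graph of `v` in
`F` and `π` is the Turán density `π(G) = lim_{n→∞} ex(n,G) C(n,k-1)⁻¹`. -/
theorem alphaF_eq_min_turan_density
    (k : ℕ) (hk : 2 ≤ k) (b : ℕ) (hb : 0 < b)
    (F : Finset (Finset (Fin b))) (hF : ∀ e ∈ F, e.card = k) (hFne : F.Nonempty) :
    ∃ π : Fin b → ℝ,
      (∀ v : Fin b,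
        Tendsto
          (fun n : ℕ => (exNum n (k - 1) (linkAt F v) : ℝ) / ((n.choose (k - 1) : ℕ) : ℝ))
          atTop (𝓝 (π v))) ∧
      alphaF k b F = ⨅ v : Fin b, π v :=
  alphaF_eq_min_turan_density_general k hk b F
end
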